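/- arXiv:2303.00850 — 3 statements merged into one kernel-verified Lean document; each statement's English description precedes it below -/
import Mathlib

section
/- The row vector π = (π0, π1, π2, π3) with π0 = (1 - q·(1-ps))·q10 / D, π1 = (1-ps)·q10·q01 / D, π2 = (1-ps)·q10·q01 / D, π3 = (1 - (1-ps)·q00)·q01 / D, where q = 1 - q10 (i.e., p^X_{1,1}), q00 = 1 - q01, and D = (q01 + q10)·(1 + (1-ps)·(q10 - q00)), is a stationary distribution of the 4-state Markov chain with transition matrix P given below; i.e., πP = π, the entries of π are nonnegative, and they sum to 1. -/
/-!
Clearing the denominator `D`, the claim is that the vector of numerators `v` is a left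
eigenvector of `P` for the eigenvalue `1`, which is a polynomial identity once
`q00 = 1 - q01` and `q11 = 1 - q10`; its entries are nonnegative and sum to `D`, so
`D⁻¹ • v` is a stationary distribution.
-/

open Matrix

def IsStationaryDistribution {n R : Type*} [Fintype n] [CommRing R] [PartialOrder R]
    (P : Matrix n n R) (π : n → R) : Prop :=
  π ᵥ* P = π ∧ (∀ i, 0 ≤ π i) ∧ ∑ i, π i = 1

theorem isStationaryDistribution_inv_sum_smul {n R : Type*} [Fintype n] [Field R] [LinearOrder R]
    [IsStrictOrderedRing R] {P : Matrix n n R} {v : n → R} (hP : v ᵥ* P = v)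
    (hv : ∀ i, 0 ≤ v i) (hs : ∑ i, v i ≠ 0) :
    IsStationaryDistribution P ((∑ i, v i)⁻¹ • v) := by
  have hs_nonneg : 0 ≤ (∑ i, v i)⁻¹ := inv_nonneg.mpr (Finset.sum_nonneg fun i _ => hv i)
  refine ⟨by rw [smul_vecMul, hP], fun i => mul_nonneg hs_nonneg (hv i), ?_⟩
  simp only [Pi.smul_apply, smul_eq_mul, ← Finset.mul_sum, inv_mul_cancel₀ hs]

section PairChain

variable {R : Type*} (q00 q01 q10 q11 ps : R)

/-- States are the pairs `(X, X̂)` in the order `(0,0), (0,1), (1,0), (1,1)`. -/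
def pairChain [Ring R] : Matrix (Fin 4) (Fin 4) R :=
  !![q00,       0,                q01 * (1 - ps), q01 * ps;
     q00 * ps,  q00 * (1 - ps),   0,              q01;
     q10,       0,                q11 * (1 - ps), q11 * ps;
     q10 * ps,  q10 * (1 - ps),   0,              q11]

def pairChainInvariant [Ring R] : Fin 4 → R :=
  ![(1 - q11 * (1 - ps)) * q10,
    (1 - ps) * q10 * q01,
    (1 - ps) * q10 * q01,
    (1 - (1 - ps) * q00) * q01]

variable {q00 q01 q10 q11 ps}

theorem pairChainInvariant_vecMul_pairChain [CommRing R] (h0 : q00 = 1 - q01)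
    (h1 : q11 = 1 - q10) :
    pairChainInvariant q00 q01 q10 q11 ps ᵥ* pairChain q00 q01 q10 q11 ps =
      pairChainInvariant q00 q01 q10 q11 ps := by
  subst h0 h1
  ext i
  fin_cases i <;>
    simp only [vecMul, dotProduct, pairChainInvariant, pairChain, Fin.sum_univ_four, Fin.isValue,
      Fin.zero_eta, Fin.mk_one, Fin.reduceFinMk, of_apply, cons_val', cons_val, cons_val_zero,
      cons_val_one, cons_val_fin_one, mul_zero, zero_add, add_zero] <;>
    ring

theorem sum_pairChainInvariant [CommRing R] (h0 : q00 = 1 - q01) (h1 : q11 = 1 - q10) :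
    ∑ i, pairChainInvariant q00 q01 q10 q11 ps i =
      (q01 + q10) * (1 + (1 - ps) * (q10 - q00)) := by
  subst h0 h1
  simp only [pairChainInvariant, Fin.sum_univ_four, Fin.isValue, cons_val_zero, cons_val_one,
    cons_val]
  ring

theorem pairChainInvariant_nonneg [CommRing R] [PartialOrder R] [IsOrderedRing R]
    (h0 : q00 = 1 - q01) (h1 : q11 = 1 - q10) (hq01 : 0 ≤ q01) (hq10 : 0 ≤ q10)
    (hps0 : 0 ≤ ps) (hps1 : ps ≤ 1) (i : Fin 4) :
    0 ≤ pairChainInvariant q00 q01 q10 q11 ps i := by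
  have h1ps : 0 ≤ 1 - ps := sub_nonneg.mpr hps1
  have hcoeff0 : 1 - q11 * (1 - ps) = ps + q10 * (1 - ps) := by rw [h1]; ring
  have hcoeff3 : 1 - (1 - ps) * q00 = ps + (1 - ps) * q01 := by rw [h0]; ring
  fin_cases i
  · simpa [pairChainInvariant, hcoeff0] using
      mul_nonneg (add_nonneg hps0 (mul_nonneg hq10 h1ps)) hq10
  · simpa [pairChainInvariant] using mul_nonneg (mul_nonneg h1ps hq10) hq01
  · simpa [pairChainInvariant] using mul_nonneg (mul_nonneg h1ps hq10) hq01
  · simpa [pairChainInvariant, hcoeff3] using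
      mul_nonneg (add_nonneg hps0 (mul_nonneg h1ps hq01)) hq01

end PairChain

/-- The explicit vector `π` is a stationary distribution of the 4-state
Markov chain on `(X, X̂)` pairs with the given transition matrix. -/
theorem four_state_stationary (q01 q10 ps : ℝ)
    (hq01 : q01 ∈ Set.Ioo (0:ℝ) 1) (hq10 : q10 ∈ Set.Ioo (0:ℝ) 1)
    (hps : ps ∈ Set.Icc (0:ℝ) 1)
    (q00 q11 D : ℝ) (hq00 : q00 = 1 - q01) (hq11 : q11 = 1 - q10)
    (hD : D = (q01 + q10) * (1 + (1 - ps) * (q10 - q00))) (hDne : D ≠ 0) :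
    let P : Matrix (Fin 4) (Fin 4) ℝ :=
      !![q00,       0,                q01 * (1 - ps), q01 * ps;
         q00 * ps,  q00 * (1 - ps),   0,              q01;
         q10,       0,                q11 * (1 - ps), q11 * ps;
         q10 * ps,  q10 * (1 - ps),   0,              q11]
    let π : Fin 4 → ℝ :=
      ![(1 - q11 * (1 - ps)) * q10 / D,
        (1 - ps) * q10 * q01 / D,
        (1 - ps) * q10 * q01 / D,
        (1 - (1 - ps) * q00) * q01 / D]
    π ᵥ* P = π ∧ (∀ i, 0 ≤ π i) ∧ (∑ i, π i) = 1 := by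
  intro P π
  have hsum : ∑ i, pairChainInvariant q00 q01 q10 q11 ps i = D := by
    rw [sum_pairChainInvariant hq00 hq11, hD]
  have hπ : π = D⁻¹ • pairChainInvariant q00 q01 q10 q11 ps := by
    ext i
    fin_cases i <;> simp [π, pairChainInvariant, div_eq_inv_mul]
  rw [hπ, ← hsum]
  exact isStationaryDistribution_inv_sum_smul (pairChainInvariant_vecMul_pairChain hq00 hq11)
    (pairChainInvariant_nonneg hq00 hq11 hq01.1.le hq10.1.le hps.1 hps.2) (hsum ▸ hDne)
end

section
/- In the 4-state chain (X, X̂) with the transition matrix of the paper, the stationary probabilities of the two mismatch states (0,1) and (1,0) are equal: π1 = π2 = (1-ps)·q10·q01 / ((q01+q10)·(1+(1-ps)(q10-q00))). -/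
open Matrix

/-- In the 4-state chain `(X, X̂)` there is a stationary distribution whose
probabilities of the two mismatch states `(0,1)` and `(1,0)` are equal,
both given by `(1-ps)·q10·q01 / ((q01+q10)·(1+(1-ps)(q10-q00)))`. -/
theorem mismatch_states_equal (q01 q10 ps : ℝ)
    (hq01 : q01 ∈ Set.Ioo (0:ℝ) 1) (hq10 : q10 ∈ Set.Ioo (0:ℝ) 1)
    (hps : ps ∈ Set.Icc (0:ℝ) 1)
    (q00 q11 : ℝ) (hq00 : q00 = 1 - q01) (hq11 : q11 = 1 - q10)
    (hDne : (q01 + q10) * (1 + (1 - ps) * (q10 - q00)) ≠ 0) :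
    let P : Matrix (Fin 4) (Fin 4) ℝ :=
      !![q00,       0,                q01 * (1 - ps), q01 * ps;
         q00 * ps,  q00 * (1 - ps),   0,              q01;
         q10,       0,                q11 * (1 - ps), q11 * ps;
         q10 * ps,  q10 * (1 - ps),   0,              q11]
    ∃ π : Fin 4 → ℝ,
      π ᵥ* P = π ∧ (∀ i, 0 ≤ π i) ∧ (∑ i, π i) = 1 ∧
      π 1 = π 2 ∧
      π 1 = (1 - ps) * q10 * q01 /
        ((q01 + q10) * (1 + (1 - ps) * (q10 - q00))) := by
  intro P
  obtain ⟨hb0, hb1⟩ := hq01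
  obtain ⟨hc0, hc1⟩ := hq10
  obtain ⟨hp0, hp1⟩ := hps
  set r : ℝ := 1 - ps with hr
  set D : ℝ := (q01 + q10) * (1 + (1 - ps) * (q10 - q00)) with hD
  have hr0 : 0 ≤ r := by simp [hr]; linarith
  have hr1 : r ≤ 1 := by simp [hr]; linarith
  have hDpos : 0 < D := by
    have h1 : 0 < q01 + q10 := by linarith
    have h2 : 0 ≤ 1 + (1 - ps) * (q10 - q00) := by
      nlinarith [mul_nonneg hr0 (by linarith : (0:ℝ) ≤ q10 + q01)]
    have : 0 ≤ D := mul_nonneg h1.le h2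
    exact lt_of_le_of_ne this (Ne.symm hDne)
  refine ⟨![q10 * (1 - r + q10 * r) / D, r * q10 * q01 / D,
           r * q10 * q01 / D, q01 * (1 - r + q01 * r) / D], ?_, ?_, ?_, ?_, ?_⟩
  · funext i
    fin_cases i <;>
      · simp [P, Matrix.vecMul, dotProduct, Fin.sum_univ_four]
        field_simp
        subst hq00 hq11
        ring
  · intro i
    have h1 : 0 ≤ 1 - r + q10 * r := by nlinarith
    have h2 : 0 ≤ 1 - r + q01 * r := by nlinarith
    fin_cases i
    · exact div_nonneg (mul_nonneg hc0.le h1) hDpos.le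
    · exact div_nonneg (mul_nonneg (mul_nonneg hr0 hc0.le) hb0.le) hDpos.le
    · exact div_nonneg (mul_nonneg (mul_nonneg hr0 hc0.le) hb0.le) hDpos.le
    · exact div_nonneg (mul_nonneg hb0.le h2) hDpos.le
  · simp [Fin.sum_univ_four]
    field_simp
    subst hq00 hq11
    ring
  · rfl
  · show r * q10 * q01 / D = (1 - ps) * q10 * q01 / D
    rw [hr]
end

section
/- A linear-fractional minimization problem min (aᵀx + b)/(cᵀx + d) over a polyhedron {x : Gx ≤ h} on which cᵀx + d > 0 attains the same optimal value as the linear program min aᵀy + b·t subject to Gy ≤ h·t, cᵀy + d·t = 1, t ≥ 0, via the Charnes–Cooper transformation y = x/(cᵀx+d), t = 1/(cᵀx+d), provided the polyhedron is nonempty and bounded. -/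
/-!
The Charnes–Cooper map `x ↦ (x, 1) / (cᵀx + d)` sends feasible points of the fractional
program to feasible points of the linear program with the same objective value, because the
ratio `(aᵀx + b) / (cᵀx + d)` is invariant under scaling `(x, 1)` by a nonzero factor. Conversely
a feasible `(y, t)` with `t > 0` comes from `y / t`. The case `t = 0` cannot occur: then `y`
would be a direction of recession of the polyhedron with `cᵀy = 1`, impossible for a nonempty
bounded polyhedron.
-/

open Matrix

theorem eq_zero_of_isBounded_of_add_smul_mem {E : Type*} [NormedAddCommGroup E]
    [NormedSpace ℝ E] {s : Set E} (hs : Bornology.IsBounded s) {x y : E}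
    (hray : ∀ r : ℝ, 0 ≤ r → x + r • y ∈ s) : y = 0 := by
  obtain ⟨C, hC⟩ := isBounded_iff_forall_norm_le.1 hs
  have hbound : ∀ r : ℝ, 0 ≤ r → r * ‖y‖ ≤ C + ‖x‖ := fun r hr => calc
    r * ‖y‖ = ‖(x + r • y) - x‖ := by
      rw [add_sub_cancel_left, norm_smul, Real.norm_of_nonneg hr]
    _ ≤ ‖x + r • y‖ + ‖x‖ := norm_sub_le _ _
    _ ≤ C + ‖x‖ := by gcongr; exact hC _ (hray r hr)
  by_contra hy
  have hny : 0 < ‖y‖ := norm_pos_iff.2 hy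
  have := hbound ((C + ‖x‖ + 1) / ‖y‖) (by
    have := (norm_nonneg _).trans (hC _ (by simpa using hray 0 le_rfl))
    positivity)
  rw [div_mul_cancel₀ _ hny.ne'] at this
  linarith

section Polyhedron

variable {ι κ 𝕜 : Type*} [Fintype κ] [Field 𝕜] [LinearOrder 𝕜] [IsStrictOrderedRing 𝕜]
  (G : Matrix ι κ 𝕜) (h : ι → 𝕜)

theorem add_smul_mem_polyhedron {x y : κ → 𝕜} (hx : ∀ i, (G *ᵥ x) i ≤ h i)
    (hy : ∀ i, (G *ᵥ y) i ≤ 0) {r : 𝕜} (hr : 0 ≤ r) : ∀ i, (G *ᵥ (x + r • y)) i ≤ h i := by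
  intro i
  rw [mulVec_add, mulVec_smul, Pi.add_apply, Pi.smul_apply, smul_eq_mul]
  linarith [hx i, mul_nonpos_of_nonneg_of_nonpos hr (hy i)]

theorem mulVec_smul_le_mul_iff {x : κ → 𝕜} {t : 𝕜} (ht : 0 < t) :
    (∀ i, (G *ᵥ (t • x)) i ≤ h i * t) ↔ ∀ i, (G *ᵥ x) i ≤ h i := by
  simp only [mulVec_smul, Pi.smul_apply, smul_eq_mul, mul_comm t, mul_le_mul_iff_left₀ ht]

end Polyhedron

theorem dotProduct_add_div_dotProduct_add_smul {κ 𝕜 : Type*} [Fintype κ] [Field 𝕜]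
    (a c x : κ → 𝕜) (b d : 𝕜) {t : 𝕜} (ht : t ≠ 0) :
    (a ⬝ᵥ x + b) / (c ⬝ᵥ x + d) = (a ⬝ᵥ (t • x) + b * t) / (c ⬝ᵥ (t • x) + d * t) := by
  simp only [dotProduct_smul, smul_eq_mul, mul_comm _ t, ← mul_add]
  exact (mul_div_mul_left _ _ ht).symm

theorem eq_zero_of_mulVec_nonpos {ι κ : Type*} [Fintype κ] {G : Matrix ι κ ℝ} {h : ι → ℝ}
    (hne : {x : κ → ℝ | ∀ i, (G *ᵥ x) i ≤ h i}.Nonempty)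
    (hbdd : Bornology.IsBounded {x : κ → ℝ | ∀ i, (G *ᵥ x) i ≤ h i})
    {y : κ → ℝ} (hy : ∀ i, (G *ᵥ y) i ≤ 0) : y = 0 := by
  obtain ⟨x, hx⟩ := hne
  exact eq_zero_of_isBounded_of_add_smul_mem hbdd fun _ hr => add_smul_mem_polyhedron G h hx hy hr

/-- Charnes–Cooper equivalence: a linear-fractional minimization over a
nonempty compact polyhedron on which the denominator is positive has the
same optimal value as the associated linear program in variables `(y, t)`. -/
theorem charnes_cooper {n m : ℕ} (a c : Fin n → ℝ) (b d : ℝ)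
    (G : Matrix (Fin m) (Fin n) ℝ) (h : Fin m → ℝ)
    (hne : {x : Fin n → ℝ | ∀ i, G.mulVec x i ≤ h i}.Nonempty)
    (hcpt : IsCompact {x : Fin n → ℝ | ∀ i, G.mulVec x i ≤ h i})
    (hden : ∀ x ∈ {x : Fin n → ℝ | ∀ i, G.mulVec x i ≤ h i},
      0 < c ⬝ᵥ x + d) :
    sInf {v : ℝ | ∃ x, (∀ i, G.mulVec x i ≤ h i) ∧
        v = (a ⬝ᵥ x + b) / (c ⬝ᵥ x + d)} =
    sInf {v : ℝ | ∃ y : Fin n → ℝ, ∃ t : ℝ, 0 ≤ t ∧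
        (∀ i, G.mulVec y i ≤ h i * t) ∧ c ⬝ᵥ y + d * t = 1 ∧
        v = a ⬝ᵥ y + b * t} := by
  congr 1
  ext v
  constructor
  · rintro ⟨x, hx, rfl⟩
    have hpos : 0 < (c ⬝ᵥ x + d)⁻¹ := inv_pos.2 (hden x hx)
    have hnorm : c ⬝ᵥ ((c ⬝ᵥ x + d)⁻¹ • x) + d * (c ⬝ᵥ x + d)⁻¹ = 1 := by
      rw [dotProduct_smul, smul_eq_mul, mul_comm d, ← mul_add, inv_mul_cancel₀ (hden x hx).ne']
    refine ⟨_, _, hpos.le, (mulVec_smul_le_mul_iff G h hpos).2 hx, hnorm, ?_⟩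
    rw [dotProduct_add_div_dotProduct_add_smul a c x b d hpos.ne', hnorm, div_one]
  · rintro ⟨y, t, ht, hy, hnorm, rfl⟩
    have htpos : 0 < t := by
      refine ht.lt_of_ne fun ht0 => ?_
      subst ht0
      have hy0 := eq_zero_of_mulVec_nonpos hne hcpt.isBounded (by simpa using hy)
      simp [hy0] at hnorm
    refine ⟨t⁻¹ • y, (mulVec_smul_le_mul_iff G h htpos).1 (by rwa [smul_inv_smul₀ htpos.ne']), ?_⟩
    rw [dotProduct_add_div_dotProduct_add_smul a c _ b d htpos.ne', smul_inv_smul₀ htpos.ne',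
      hnorm, div_one]
end
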